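/- Let H be a real constant with H > 1 and set k = √(H² − 1). Then the function φ(s) = 2·arctan((H − 1)·tan(k·s)/k), defined on the interval (−π/(2k), π/(2k)), satisfies φ'(s) = 2·H − 2·cos φ(s) for all s in that interval. -/

import Mathlib

/-! Under the substitution `φ = 2 arctan u` we have `cos φ = (1 - u²)/(1 + u²)` and
`φ' = 2u'/(1 + u²)`, so `φ' = 2H - 2 cos φ` becomes the Riccati equation
`u' = (H - 1) + (H + 1) u²`. Since `(H - 1)(H + 1) = k²`, it is solved by
`u(s) = (H - 1) tan(k s) / k` wherever `cos (k s) ≠ 0`, in particular for `|k s| < π/2`. -/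

open Real Set

theorem Real.cos_two_mul_arctan (x : ℝ) : cos (2 * arctan x) = (1 - x ^ 2) / (1 + x ^ 2) := by
  have : 0 < 1 + x ^ 2 := by positivity
  rw [cos_two_mul, cos_sq_arctan]
  field_simp
  ring

theorem hasDerivAt_two_mul_arctan_of_riccati {H u' : ℝ} {u : ℝ → ℝ} {s : ℝ}
    (hu : HasDerivAt u u' s) (hu' : u' = (H - 1) + (H + 1) * u s ^ 2) :
    HasDerivAt (fun t => 2 * arctan (u t)) (2 * H - 2 * cos (2 * arctan (u s))) s := by
  refine (hu.arctan.const_mul 2).congr_deriv ?_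
  have : 0 < 1 + u s ^ 2 := by positivity
  rw [cos_two_mul_arctan, hu']
  field_simp
  ring

theorem hasDerivAt_mul_tan_mul_div {a b k s : ℝ} (hk : k ^ 2 = a * b) (hk0 : k ≠ 0)
    (hc : cos (k * s) ≠ 0) :
    HasDerivAt (fun t => a * tan (k * t) / k) (a + b * (a * tan (k * s) / k) ^ 2) s := by
  have htan : HasDerivAt (fun t => tan (k * t)) (1 / cos (k * s) ^ 2 * k) s :=
    (hasDerivAt_tan hc).comp s ((hasDerivAt_id s).const_mul k |>.congr_deriv (mul_one k))
  refine ((htan.const_mul a).div_const k).congr_deriv ?_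
  rw [one_div, ← inv_one_add_tan_sq hc]
  field_simp
  linear_combination (a * tan (k * s) ^ 2) * hk

theorem cos_mul_pos_of_mem_Ioo {k s : ℝ} (hk : 0 < k)
    (hs : s ∈ Ioo (-(π / (2 * k))) (π / (2 * k))) : 0 < cos (k * s) := by
  apply cos_pos_of_mem_Ioo
  have hπk : π / (2 * k) * k = π / 2 := by field_simp
  constructor <;> nlinarith [hs.1, hs.2]

/-- for `H > 1` and `k = √(H² - 1)`, the function
`φ(s) = 2 arctan((H-1) tan(k s) / k)` solves `φ' = 2H - 2 cos φ` on the
interval `(-π/(2k), π/(2k))`. -/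
theorem stmt_15 (H : ℝ) (hH : 1 < H) (k : ℝ) (hk : k = Real.sqrt (H ^ 2 - 1))
    (φ : ℝ → ℝ)
    (hφ : φ = fun s => 2 * Real.arctan ((H - 1) * Real.tan (k * s) / k)) :
    ∀ s ∈ Set.Ioo (-(Real.pi / (2 * k))) (Real.pi / (2 * k)),
      HasDerivAt φ (2 * H - 2 * Real.cos (φ s)) s := by
  intro s hs
  have hH2 : 0 < H ^ 2 - 1 := by nlinarith
  have hk0 : 0 < k := hk ▸ sqrt_pos.mpr hH2
  have hksq : k ^ 2 = (H - 1) * (H + 1) := by rw [hk, sq_sqrt hH2.le]; ring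
  subst hφ
  exact hasDerivAt_two_mul_arctan_of_riccati
    (hasDerivAt_mul_tan_mul_div hksq hk0.ne' (cos_mul_pos_of_mem_Ioo hk0 hs).ne') rfl
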